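/- Let G be a class 2 graph with Δ(G) = Δ, let v₀v₁ ∈ E(G), φ a proper edge Δ-coloring of G − v₀v₁, and K = (v₀, v₀v₁, v₁, v₁v₂, v₂, v₂v₃, v₃) a Kierstead path with respect to v₀v₁ and φ. If min{deg(v₁), deg(v₂)} < Δ, then {v₀, v₁, v₂, v₃} is φ-elementary. -/

import Mathlib

/-!
Every contradiction comes from class 2: a colour missing at both ends of the uncoloured edge
`v₀v₁` would extend `φ` to a `Δ`-edge-colouring of `G`. A colour missing at two other vertices of
the path is moved towards `v₀` and `v₁` by recolouring a path edge, by shifting the uncoloured edge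
from `v₀v₁` to `v₁v₂`, or by a Kempe change. Kempe changes are controlled by the fact that a
`(γ, δ)`-chain has maximum degree two, so no chain contains three vertices each missing `γ` or `δ`.
The degree condition supplies the extra missing colour at `v₁` or `v₂` that the pair `v₀, v₃`
needs.
-/

open SimpleGraph

/-- A proper edge `k`-coloring of `G` with colors in `[1, k]`. -/
def IsProperEdgeColoring {V : Type*} (G : SimpleGraph V) (k : ℕ) (c : Sym2 V → ℕ) : Prop :=
  (∀ e ∈ G.edgeSet, c e ∈ Finset.Icc 1 k) ∧
  ∀ e ∈ G.edgeSet, ∀ f ∈ G.edgeSet, e ≠ f → (∃ v : V, v ∈ e ∧ v ∈ f) → c e ≠ c f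

/-- `G` has a proper edge coloring with `k` colors. -/
def EdgeColorable {V : Type*} (G : SimpleGraph V) (k : ℕ) : Prop :=
  ∃ c : Sym2 V → ℕ, IsProperEdgeColoring G k c

/-- The set of colors of `[1, k]` missing at `v`. -/
def missingColors {V : Type*} (G : SimpleGraph V) (k : ℕ) (c : Sym2 V → ℕ) (v : V) : Set ℕ :=
  {α | α ∈ Finset.Icc 1 k ∧ ¬ ∃ e ∈ G.edgeSet, v ∈ e ∧ c e = α}

/-- The subgraph of `G` consisting of the edges colored `α` or `β`;
its components are the `(α, β)`-chains. -/
def chainGraph {V : Type*} (G : SimpleGraph V) (c : Sym2 V → ℕ) (α β : ℕ) : SimpleGraph V :=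
  SimpleGraph.fromEdgeSet {e ∈ G.edgeSet | c e = α ∨ c e = β}

section Recolouring

variable {V : Type*} {G₀ G₁ : SimpleGraph V} {k : ℕ} {c c' : Sym2 V → ℕ}

theorem mem_missingColors_iff {v : V} {θ : ℕ} :
    θ ∈ missingColors G₀ k c v ↔ θ ∈ Finset.Icc 1 k ∧ ∀ e ∈ G₀.edgeSet, v ∈ e → c e ≠ θ := by
  simp [missingColors]

theorem ne_of_mem_missingColors {v : V} {θ : ℕ} (h : θ ∈ missingColors G₀ k c v)
    {e : Sym2 V} (he : e ∈ G₀.edgeSet) (hv : v ∈ e) : c e ≠ θ :=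
  (mem_missingColors_iff.1 h).2 e he hv

theorem mem_missingColors_congr {v : V} (h : ∀ e ∈ G₀.edgeSet, v ∈ e → c' e = c e) {θ : ℕ} :
    θ ∈ missingColors G₀ k c' v ↔ θ ∈ missingColors G₀ k c v := by
  simp +contextual only [mem_missingColors_iff, h]

theorem IsProperEdgeColoring.mem_Icc (hc : IsProperEdgeColoring G₀ k c) {e : Sym2 V}
    (he : e ∈ G₀.edgeSet) : c e ∈ Finset.Icc 1 k :=
  hc.1 e he

theorem IsProperEdgeColoring.ne_of_mem (hc : IsProperEdgeColoring G₀ k c) {e f : Sym2 V}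
    (he : e ∈ G₀.edgeSet) (hf : f ∈ G₀.edgeSet) (hef : e ≠ f) {v : V} (hve : v ∈ e)
    (hvf : v ∈ f) : c e ≠ c f :=
  hc.2 e he f hf hef ⟨v, hve, hvf⟩

theorem mem_edgeSet_deleteEdges_singleton {G : SimpleGraph V} {d e : Sym2 V} :
    e ∈ (G.deleteEdges {d}).edgeSet ↔ e ∈ G.edgeSet ∧ e ≠ d := by
  simp [edgeSet_deleteEdges]

section Update

variable [DecidableEq V]

/-- `G₁` may differ from `G₀` at `e`: this also covers extending a colouring of `G - e` to `G`
and moving the uncoloured edge. -/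
theorem IsProperEdgeColoring.update (hc : IsProperEdgeColoring G₀ k c) {e : Sym2 V} {θ : ℕ}
    (hθ : θ ∈ Finset.Icc 1 k) (hsub : ∀ f ∈ G₁.edgeSet, f ≠ e → f ∈ G₀.edgeSet)
    (hfree : ∀ f ∈ G₁.edgeSet, f ≠ e → ∀ v ∈ e, v ∈ f → c f ≠ θ) :
    IsProperEdgeColoring G₁ k (Function.update c e θ) := by
  refine ⟨fun f hf => ?_, fun f hf f' hf' hff' ⟨v, hvf, hvf'⟩ => ?_⟩
  · rcases eq_or_ne f e with rfl | hfe
    · simpa using hθ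
    · simpa [hfe] using hc.mem_Icc (hsub f hf hfe)
  rcases eq_or_ne f e with rfl | hfe
  · have hf'e : f' ≠ f := hff'.symm
    simpa [hf'e] using (hfree f' hf' hf'e v hvf hvf').symm
  rcases eq_or_ne f' e with rfl | hf'e
  · simpa [hfe] using hfree f hf hfe v hvf' hvf
  simpa [hfe, hf'e] using hc.ne_of_mem (hsub f hf hfe) (hsub f' hf' hf'e) hff' hvf hvf'

theorem IsProperEdgeColoring.update_of_mem_missingColors (hc : IsProperEdgeColoring G₀ k c)
    {u v : V} {θ : ℕ} (hu : θ ∈ missingColors G₀ k c u) (hv : θ ∈ missingColors G₀ k c v) :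
    IsProperEdgeColoring G₀ k (Function.update c s(u, v) θ) := by
  refine hc.update (mem_missingColors_iff.1 hu).1 (fun f hf _ => hf) fun f hf _ w hw hwf => ?_
  rcases Sym2.mem_iff.1 hw with rfl | rfl
  · exact ne_of_mem_missingColors hu hf hwf
  · exact ne_of_mem_missingColors hv hf hwf

theorem mem_missingColors_update_of_notMem {e : Sym2 V} {w : V} (hw : w ∉ e) {θ σ : ℕ} :
    σ ∈ missingColors G₀ k (Function.update c e θ) w ↔ σ ∈ missingColors G₀ k c w :=
  mem_missingColors_congr fun f _ hwf => Function.update_of_ne (by rintro rfl; exact hw hwf) _ _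

theorem IsProperEdgeColoring.mem_missingColors_update (hc : IsProperEdgeColoring G₀ k c)
    {e : Sym2 V} (he : e ∈ G₀.edgeSet) {w : V} (hw : w ∈ e) {θ : ℕ} (hθ : c e ≠ θ) :
    c e ∈ missingColors G₀ k (Function.update c e θ) w := by
  refine mem_missingColors_iff.2 ⟨hc.mem_Icc he, fun f hf hwf => ?_⟩
  rcases eq_or_ne f e with rfl | hfe
  · simpa using hθ.symm
  · simpa [hfe] using hc.ne_of_mem hf he hfe hwf hw

end Update

theorem edgeColorable_of_mem_missingColors {G : SimpleGraph V} {a b : V}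
    (hc : IsProperEdgeColoring (G.deleteEdges {s(a, b)}) k c) {θ : ℕ}
    (ha : θ ∈ missingColors (G.deleteEdges {s(a, b)}) k c a)
    (hb : θ ∈ missingColors (G.deleteEdges {s(a, b)}) k c b) :
    EdgeColorable G k := by
  classical
  have hsub : ∀ f ∈ G.edgeSet, f ≠ s(a, b) → f ∈ (G.deleteEdges {s(a, b)}).edgeSet :=
    fun f hf hfe => mem_edgeSet_deleteEdges_singleton.2 ⟨hf, hfe⟩
  refine ⟨_, hc.update (mem_missingColors_iff.1 ha).1 hsub fun f hf hfe w hw hwf => ?_⟩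
  rcases Sym2.mem_iff.1 hw with rfl | rfl
  · exact ne_of_mem_missingColors ha (hsub f hf hfe) hwf
  · exact ne_of_mem_missingColors hb (hsub f hf hfe) hwf

theorem disjoint_missingColors_of_not_edgeColorable {G : SimpleGraph V}
    (hG : ¬ EdgeColorable G k) {a b : V} (hc : IsProperEdgeColoring (G.deleteEdges {s(a, b)}) k c) :
    Disjoint (missingColors (G.deleteEdges {s(a, b)}) k c a)
      (missingColors (G.deleteEdges {s(a, b)}) k c b) :=
  Set.disjoint_left.2 fun _ ha hb => hG (edgeColorable_of_mem_missingColors hc ha hb)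

end Recolouring

section PathComponents

variable {V : Type*} {H : SimpleGraph V}

theorem SimpleGraph.Walk.IsPath.exists_adj_adj_of_mem_support {x y v : V} {p : H.Walk x y}
    (hp : p.IsPath) (hv : v ∈ p.support) (hvx : v ≠ x) (hvy : v ≠ y) :
    ∃ a ∈ p.support, ∃ b ∈ p.support, a ≠ b ∧ H.Adj v a ∧ H.Adj v b := by
  obtain ⟨i, rfl, hi⟩ := Walk.mem_support_iff_exists_getVert.1 hv
  have hi0 : i ≠ 0 := by rintro rfl; exact hvx p.getVert_zero
  have hil : i < p.length := hi.lt_of_ne (by rintro rfl; exact hvy p.getVert_length)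
  refine ⟨_, p.getVert_mem_support (i - 1), _, p.getVert_mem_support (i + 1), fun h => ?_,
    ?_, p.adj_getVert_succ hil⟩
  · have := hp.getVert_injOn (show i - 1 ≤ p.length by omega) (show i + 1 ≤ p.length by omega) h
    omega
  · simpa [Nat.sub_add_cancel (Nat.pos_of_ne_zero hi0)] using
      (p.adj_getVert_succ (i := i - 1) (by omega)).symm

theorem SimpleGraph.Walk.exists_adj_start_of_ne {x y : V} (p : H.Walk x y) (hxy : x ≠ y) :
    ∃ a ∈ p.support, H.Adj x a := by
  cases p with
  | nil => exact absurd rfl hxy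
  | cons h q => exact ⟨_, by simp, h⟩

variable {x y z : V}

theorem SimpleGraph.Walk.IsPath.mem_support_of_reachable
    (hdeg : ∀ v a b d, H.Adj v a → H.Adj v b → H.Adj v d → a = b ∨ a = d ∨ b = d)
    (hx : (H.neighborSet x).Subsingleton) (hy : (H.neighborSet y).Subsingleton)
    (hxy : x ≠ y) {p : H.Walk x y}
    (hp : p.IsPath) (hz : H.Reachable x z) : z ∈ p.support := by
  have hclosed : ∀ {v w}, v ∈ p.support → H.Adj v w → w ∈ p.support := by
    intro v w hv hvw
    by_cases hvx : v = x
    · subst hvx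
      obtain ⟨a, ha, hva⟩ := p.exists_adj_start_of_ne hxy
      exact hx hvw hva ▸ ha
    by_cases hvy : v = y
    · subst hvy
      obtain ⟨a, ha, hva⟩ := p.reverse.exists_adj_start_of_ne hxy.symm
      exact hy hvw hva ▸ by simpa using ha
    obtain ⟨a, ha, b, hb, hab, hva, hvb⟩ := hp.exists_adj_adj_of_mem_support hv hvx hvy
    rcases hdeg v a b w hva hvb hvw with h | rfl | rfl
    exacts [absurd h hab, ha, hb]
  have key : ∀ {u}, u ∈ p.support → H.Walk u z → z ∈ p.support := by
    intro u hu q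
    clear hz
    induction q with
    | nil => exact hu
    | cons h _ ih => exact ih (hclosed hu h)
  exact key p.start_mem_support hz.some

theorem not_reachable_of_subsingleton_neighborSet
    (hdeg : ∀ v a b d, H.Adj v a → H.Adj v b → H.Adj v d → a = b ∨ a = d ∨ b = d)
    (hx : (H.neighborSet x).Subsingleton) (hy : (H.neighborSet y).Subsingleton)
    (hz : (H.neighborSet z).Subsingleton)
    (hxy : x ≠ y) (hxz : x ≠ z) (hyz : y ≠ z) (h : H.Reachable x y) :
    ¬ H.Reachable x z ∧ ¬ H.Reachable y z := by
  suffices ¬ H.Reachable x z from ⟨this, fun h' => this (h.trans h')⟩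
  intro h'
  obtain ⟨p, hp⟩ := h.exists_isPath
  obtain ⟨a, -, b, -, hab, hza, hzb⟩ := hp.exists_adj_adj_of_mem_support
    (hp.mem_support_of_reachable hdeg hx hy hxy h') hxz.symm hyz.symm
  exact hab (hz hza hzb)

end PathComponents

section KempeChains

variable {V : Type*} {G₀ : SimpleGraph V} {k : ℕ} {c : Sym2 V → ℕ} {γ δ : ℕ}

theorem chainGraph_adj {x y : V} :
    (chainGraph G₀ c γ δ).Adj x y ↔ G₀.Adj x y ∧ (c s(x, y) = γ ∨ c s(x, y) = δ) := by
  simp only [chainGraph, fromEdgeSet_adj, Set.mem_ofPred_eq, mem_edgeSet]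
  exact ⟨fun h => h.1, fun h => ⟨h, h.1.ne⟩⟩

theorem IsProperEdgeColoring.chainGraph_color_ne (hc : IsProperEdgeColoring G₀ k c) {v a b : V}
    (ha : (chainGraph G₀ c γ δ).Adj v a) (hb : (chainGraph G₀ c γ δ).Adj v b) (hab : a ≠ b) :
    c s(v, a) ≠ c s(v, b) :=
  hc.ne_of_mem (chainGraph_adj.1 ha).1 (chainGraph_adj.1 hb).1
    (by simpa [hab] using fun _ : v = b => ha.ne.symm)
    (Sym2.mem_mk_left _ _) (Sym2.mem_mk_left _ _)

theorem IsProperEdgeColoring.chainGraph_adj_three (hc : IsProperEdgeColoring G₀ k c)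
    (v a b d : V) (ha : (chainGraph G₀ c γ δ).Adj v a) (hb : (chainGraph G₀ c γ δ).Adj v b)
    (hd : (chainGraph G₀ c γ δ).Adj v d) : a = b ∨ a = d ∨ b = d := by
  by_contra! h
  have hab := hc.chainGraph_color_ne ha hb h.1
  have had := hc.chainGraph_color_ne ha hd h.2.1
  have hbd := hc.chainGraph_color_ne hb hd h.2.2
  have := (chainGraph_adj.1 ha).2
  have := (chainGraph_adj.1 hb).2
  have := (chainGraph_adj.1 hd).2
  omega

theorem IsProperEdgeColoring.subsingleton_neighborSet_chainGraph
    (hc : IsProperEdgeColoring G₀ k c) {v : V}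
    (hv : γ ∈ missingColors G₀ k c v ∨ δ ∈ missingColors G₀ k c v) :
    ((chainGraph G₀ c γ δ).neighborSet v).Subsingleton := by
  intro a ha b hb
  by_contra hab
  have hne := hc.chainGraph_color_ne ha hb hab
  obtain ⟨θ, hθ, hθv⟩ : ∃ θ, (θ = γ ∨ θ = δ) ∧ θ ∈ missingColors G₀ k c v := by
    rcases hv with h | h
    exacts [⟨γ, .inl rfl, h⟩, ⟨δ, .inr rfl, h⟩]
  have hθa := ne_of_mem_missingColors hθv (chainGraph_adj.1 ha).1 (Sym2.mem_mk_left v a)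
  have hθb := ne_of_mem_missingColors hθv (chainGraph_adj.1 hb).1 (Sym2.mem_mk_left v b)
  have := (chainGraph_adj.1 ha).2
  have := (chainGraph_adj.1 hb).2
  omega

theorem IsProperEdgeColoring.not_reachable_chainGraph (hc : IsProperEdgeColoring G₀ k c)
    {x y z : V} (hx : γ ∈ missingColors G₀ k c x ∨ δ ∈ missingColors G₀ k c x)
    (hy : γ ∈ missingColors G₀ k c y ∨ δ ∈ missingColors G₀ k c y)
    (hz : γ ∈ missingColors G₀ k c z ∨ δ ∈ missingColors G₀ k c z)
    (hxy : x ≠ y) (hxz : x ≠ z) (hyz : y ≠ z) (h : (chainGraph G₀ c γ δ).Reachable x y) :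
    ¬ (chainGraph G₀ c γ δ).Reachable x z ∧ ¬ (chainGraph G₀ c γ δ).Reachable y z :=
  not_reachable_of_subsingleton_neighborSet hc.chainGraph_adj_three
    (hc.subsingleton_neighborSet_chainGraph hx) (hc.subsingleton_neighborSet_chainGraph hy)
    (hc.subsingleton_neighborSet_chainGraph hz) hxy hxz hyz h

theorem Equiv.swap_apply_mem_iff {α : Type*} [DecidableEq α] {s : Finset α} {a b x : α}
    (ha : a ∈ s) (hb : b ∈ s) : Equiv.swap a b x ∈ s ↔ x ∈ s := by
  rcases eq_or_ne x a with rfl | hxa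
  · simpa using ⟨fun _ => ha, fun _ => hb⟩
  rcases eq_or_ne x b with rfl | hxb
  · simpa using ⟨fun _ => hb, fun _ => ha⟩
  rw [Equiv.swap_apply_of_ne_of_ne hxa hxb]

open Classical in
/-- The Kempe change at `u`; edges of other colours are fixed by `Equiv.swap γ δ`. -/
noncomputable def kempeSwap (G₀ : SimpleGraph V) (c : Sym2 V → ℕ) (γ δ : ℕ) (u : V) :
    Sym2 V → ℕ :=
  fun e => if ∃ x ∈ e, (chainGraph G₀ c γ δ).Reachable x u then Equiv.swap γ δ (c e) else c e

variable {u v : V} {e : Sym2 V}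

theorem kempeSwap_of_reachable (hv : v ∈ e) (hr : (chainGraph G₀ c γ δ).Reachable v u) :
    kempeSwap G₀ c γ δ u e = Equiv.swap γ δ (c e) :=
  if_pos ⟨v, hv, hr⟩

theorem kempeSwap_of_ne (hγ : c e ≠ γ) (hδ : c e ≠ δ) : kempeSwap G₀ c γ δ u e = c e := by
  unfold kempeSwap
  split_ifs <;> simp [Equiv.swap_apply_of_ne_of_ne hγ hδ]

theorem kempeSwap_of_not_reachable (he : e ∈ G₀.edgeSet) (hv : v ∈ e)
    (hr : ¬ (chainGraph G₀ c γ δ).Reachable v u) : kempeSwap G₀ c γ δ u e = c e := by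
  obtain ⟨w, rfl⟩ := Sym2.mem_iff_exists.1 hv
  by_cases hcol : c s(v, w) = γ ∨ c s(v, w) = δ
  · have hvw : (chainGraph G₀ c γ δ).Adj v w := chainGraph_adj.2 ⟨he, hcol⟩
    refine if_neg fun ⟨x, hx, hxu⟩ => hr ?_
    rcases Sym2.mem_iff.1 hx with rfl | rfl
    exacts [hxu, hvw.reachable.trans hxu]
  · rw [not_or] at hcol
    exact kempeSwap_of_ne hcol.1 hcol.2

theorem IsProperEdgeColoring.kempeSwap (hc : IsProperEdgeColoring G₀ k c)
    (hγ : γ ∈ Finset.Icc 1 k) (hδ : δ ∈ Finset.Icc 1 k) (u : V) :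
    IsProperEdgeColoring G₀ k (kempeSwap G₀ c γ δ u) := by
  refine ⟨fun e he => ?_, fun e he f hf hef ⟨v, hve, hvf⟩ => ?_⟩
  · unfold _root_.kempeSwap
    split_ifs
    · exact (Equiv.swap_apply_mem_iff hγ hδ).2 (hc.mem_Icc he)
    · exact hc.mem_Icc he
  by_cases hr : (chainGraph G₀ c γ δ).Reachable v u
  · rw [kempeSwap_of_reachable hve hr, kempeSwap_of_reachable hvf hr]
    exact (Equiv.injective _).ne (hc.ne_of_mem he hf hef hve hvf)
  · rw [kempeSwap_of_not_reachable he hve hr, kempeSwap_of_not_reachable hf hvf hr]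
    exact hc.ne_of_mem he hf hef hve hvf

theorem mem_missingColors_kempeSwap_of_reachable (hγ : γ ∈ Finset.Icc 1 k)
    (hδ : δ ∈ Finset.Icc 1 k) (hr : (chainGraph G₀ c γ δ).Reachable v u) {θ : ℕ} :
    θ ∈ missingColors G₀ k (kempeSwap G₀ c γ δ u) v ↔
      Equiv.swap γ δ θ ∈ missingColors G₀ k c v := by
  simp only [mem_missingColors_iff]
  refine and_congr (Equiv.swap_apply_mem_iff hγ hδ).symm
    (forall₂_congr fun e _ => forall_congr' fun hv => ?_)
  rw [kempeSwap_of_reachable hv hr, ne_eq, Equiv.swap_apply_eq_iff]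

theorem mem_missingColors_kempeSwap_of_not_reachable
    (hr : ¬ (chainGraph G₀ c γ δ).Reachable v u) {θ : ℕ} :
    θ ∈ missingColors G₀ k (kempeSwap G₀ c γ δ u) v ↔ θ ∈ missingColors G₀ k c v :=
  mem_missingColors_congr fun _ he hv => kempeSwap_of_not_reachable he hv hr

theorem mem_missingColors_kempeSwap_of_ne (hγ : γ ∈ Finset.Icc 1 k) (hδ : δ ∈ Finset.Icc 1 k)
    {θ : ℕ} (hθγ : θ ≠ γ) (hθδ : θ ≠ δ) :
    θ ∈ missingColors G₀ k (kempeSwap G₀ c γ δ u) v ↔ θ ∈ missingColors G₀ k c v := by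
  by_cases hr : (chainGraph G₀ c γ δ).Reachable v u
  · rw [mem_missingColors_kempeSwap_of_reachable hγ hδ hr,
      Equiv.swap_apply_of_ne_of_ne hθγ hθδ]
  · exact mem_missingColors_kempeSwap_of_not_reachable hr

theorem mem_missingColors_kempeSwap_self_left (hγ : γ ∈ Finset.Icc 1 k)
    (hδ : δ ∈ Finset.Icc 1 k) (h : γ ∈ missingColors G₀ k c u) :
    δ ∈ missingColors G₀ k (kempeSwap G₀ c γ δ u) u :=
  (mem_missingColors_kempeSwap_of_reachable hγ hδ .rfl).2 (by rwa [Equiv.swap_apply_right])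

theorem mem_missingColors_kempeSwap_self_right (hγ : γ ∈ Finset.Icc 1 k)
    (hδ : δ ∈ Finset.Icc 1 k) (h : δ ∈ missingColors G₀ k c u) :
    γ ∈ missingColors G₀ k (kempeSwap G₀ c γ δ u) u :=
  (mem_missingColors_kempeSwap_of_reachable hγ hδ .rfl).2 (by rwa [Equiv.swap_apply_left])

theorem kempeSwap_apply_mem_missingColors_of_ne (hγ : γ ∈ Finset.Icc 1 k)
    (hδ : δ ∈ Finset.Icc 1 k) (heγ : c e ≠ γ) (heδ : c e ≠ δ) (h : c e ∈ missingColors G₀ k c v) :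
    kempeSwap G₀ c γ δ u e ∈ missingColors G₀ k (kempeSwap G₀ c γ δ u) v := by
  rw [kempeSwap_of_ne heγ heδ]
  exact (mem_missingColors_kempeSwap_of_ne hγ hδ heγ heδ).2 h

theorem mem_missingColors_kempeSwap_of_not_edgeColorable {G : SimpleGraph V}
    (hG : ¬ EdgeColorable G k) {a b w : V} (hab : a ≠ b) (haw : a ≠ w) (hbw : b ≠ w)
    (hc : IsProperEdgeColoring (G.deleteEdges {s(a, b)}) k c)
    (ha : γ ∈ missingColors (G.deleteEdges {s(a, b)}) k c a)
    (hw : γ ∈ missingColors (G.deleteEdges {s(a, b)}) k c w)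
    (hb : δ ∈ missingColors (G.deleteEdges {s(a, b)}) k c b) :
    δ ∈ missingColors (G.deleteEdges {s(a, b)}) k
        (kempeSwap (G.deleteEdges {s(a, b)}) c γ δ w) b ∧
      δ ∈ missingColors (G.deleteEdges {s(a, b)}) k
        (kempeSwap (G.deleteEdges {s(a, b)}) c γ δ w) w := by
  have hγ := (mem_missingColors_iff.1 ha).1
  have hδ := (mem_missingColors_iff.1 hb).1
  -- if the `(γ, δ)`-chain at `b` avoids `a`, swapping it lets `γ` colour `ab`
  by_cases hr : (chainGraph (G.deleteEdges {s(a, b)}) c γ δ).Reachable a b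
  · obtain ⟨-, hbw'⟩ := hc.not_reachable_chainGraph (.inl ha) (.inr hb) (.inl hw) hab haw hbw hr
    exact ⟨(mem_missingColors_kempeSwap_of_not_reachable hbw').2 hb,
      mem_missingColors_kempeSwap_self_left hγ hδ hw⟩
  · exact (hG (edgeColorable_of_mem_missingColors (hc.kempeSwap hγ hδ b)
      ((mem_missingColors_kempeSwap_of_not_reachable hr).2 ha)
      (mem_missingColors_kempeSwap_self_right hγ hδ hb))).elim

end KempeChains

section MissingColours

variable {V : Type*} {k : ℕ} {c : Sym2 V → ℕ}

theorem exists_mem_missingColors_notMem {G₀ : SimpleGraph V} {v : V} {N : Finset V}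
    (hN : ∀ w, G₀.Adj v w → w ∈ N) {s : Finset ℕ} (hcard : N.card + s.card < k) :
    ∃ t ∈ missingColors G₀ k c v, t ∉ s := by
  classical
  set used := N.image fun w => c s(v, w)
  obtain ⟨t, ht⟩ : (Finset.Icc 1 k \ (used ∪ s)).Nonempty := by
    rw [← Finset.card_pos]
    have := Finset.le_card_sdiff (used ∪ s) (Finset.Icc 1 k)
    have := Finset.card_union_le used s
    have : used.card ≤ N.card := Finset.card_image_le
    simp only [Nat.card_Icc] at *
    omega
  simp only [Finset.mem_sdiff, Finset.mem_union, not_or] at ht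
  refine ⟨t, mem_missingColors_iff.2 ⟨ht.1, fun e he hv => ?_⟩, ht.2.2⟩
  obtain ⟨w, rfl⟩ := Sym2.mem_iff_exists.1 hv
  exact fun h => ht.2.1 (Finset.mem_image.2 ⟨w, hN w he, h⟩)

variable {G : SimpleGraph V}

theorem exists_mem_missingColors_deleteEdges_of_adj {a b : V} [Fintype (G.neighborSet b)]
    (hab : G.Adj a b) (s : Finset ℕ) (hcard : G.degree b + s.card ≤ k) :
    ∃ t ∈ missingColors (G.deleteEdges {s(a, b)}) k c b, t ∉ s := by
  classical
  refine exists_mem_missingColors_notMem (N := (G.neighborFinset b).erase a) (fun w hw => ?_) ?_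
  · rw [deleteEdges_adj, Set.mem_singleton_iff, Sym2.eq_swap] at hw
    simpa [hw.1] using fun h : w = a => hw.2 (h ▸ rfl)
  · have := G.degree_pos_iff_exists_adj b |>.2 ⟨a, hab.symm⟩
    rw [Finset.card_erase_of_mem (by simpa using hab.symm), card_neighborFinset_eq_degree]
    omega

theorem exists_mem_missingColors_of_degree_lt {v : V} [Fintype (G.neighborSet v)]
    {D : Set (Sym2 V)} (hv : G.degree v < k) :
    ∃ t, t ∈ missingColors (G.deleteEdges D) k c v := by
  obtain ⟨t, ht, -⟩ := exists_mem_missingColors_notMem (G₀ := G.deleteEdges D) (c := c) (s := ∅)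
    (N := G.neighborFinset v) (fun w hw => by simpa using (deleteEdges_adj.1 hw).1)
    (by simpa using hv)
  exact ⟨t, ht⟩

end MissingColours

section KiersteadPaths

variable {V : Type*} [Fintype V]

/-- `φ̄(v)`, for a colouring `c` of `G - ab` with `Δ(G)` colours. -/
abbrev missingColorsDel (G : SimpleGraph V) [DecidableRel G.Adj] (a b : V) (c : Sym2 V → ℕ) :
    V → Set ℕ :=
  missingColors (G.deleteEdges {s(a, b)}) G.maxDegree c

structure IsKiersteadPath₂ (G : SimpleGraph V) [DecidableRel G.Adj] (c : Sym2 V → ℕ)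
    (v₀ v₁ v₂ : V) : Prop where
  adj₀₁ : G.Adj v₀ v₁
  adj₁₂ : G.Adj v₁ v₂
  ne₀₂ : v₀ ≠ v₂
  proper : IsProperEdgeColoring (G.deleteEdges {s(v₀, v₁)}) G.maxDegree c
  color₁₂_mem : c s(v₁, v₂) ∈ missingColorsDel G v₀ v₁ c v₀

structure IsKiersteadPath₃ (G : SimpleGraph V) [DecidableRel G.Adj] (c : Sym2 V → ℕ)
    (v₀ v₁ v₂ v₃ : V) : Prop extends IsKiersteadPath₂ G c v₀ v₁ v₂ where
  adj₂₃ : G.Adj v₂ v₃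
  ne₀₃ : v₀ ≠ v₃
  ne₁₃ : v₁ ≠ v₃
  color₂₃_mem : c s(v₂, v₃) ∈ missingColorsDel G v₀ v₁ c v₀ ∪ missingColorsDel G v₀ v₁ c v₁

variable {G : SimpleGraph V} [DecidableRel G.Adj] {c : Sym2 V → ℕ}

namespace IsKiersteadPath₂

variable {v₀ v₁ v₂ : V}

theorem edge₁₂_mem (K : IsKiersteadPath₂ G c v₀ v₁ v₂) :
    s(v₁, v₂) ∈ (G.deleteEdges {s(v₀, v₁)}).edgeSet := by
  simpa [edgeSet_deleteEdges, K.adj₁₂.ne', K.ne₀₂.symm] using K.adj₁₂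

theorem disjoint₁₂ (K : IsKiersteadPath₂ G c v₀ v₁ v₂) (hG : ¬ EdgeColorable G G.maxDegree) :
    Disjoint (missingColorsDel G v₀ v₁ c v₁) (missingColorsDel G v₀ v₁ c v₂) := by
  classical
  refine Set.disjoint_left.2 fun γ h₁ h₂ => hG ?_
  -- recolouring `v₁v₂` with `γ` frees its old colour at `v₁`, and it was already free at `v₀`
  have hv₀ : v₀ ∉ s(v₁, v₂) := by simp [K.adj₀₁.ne, K.ne₀₂]
  exact edgeColorable_of_mem_missingColors (K.proper.update_of_mem_missingColors h₁ h₂)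
    ((mem_missingColors_update_of_notMem hv₀).2 K.color₁₂_mem)
    (K.proper.mem_missingColors_update K.edge₁₂_mem (Sym2.mem_mk_left _ _)
      (ne_of_mem_missingColors h₂ K.edge₁₂_mem (Sym2.mem_mk_right _ _)))

theorem kempeSwap (K : IsKiersteadPath₂ G c v₀ v₁ v₂) {γ δ : ℕ}
    (hγ : γ ∈ Finset.Icc 1 G.maxDegree) (hδ : δ ∈ Finset.Icc 1 G.maxDegree)
    (hαγ : c s(v₁, v₂) ≠ γ) (hαδ : c s(v₁, v₂) ≠ δ) (u : V) :
    IsKiersteadPath₂ G (kempeSwap (G.deleteEdges {s(v₀, v₁)}) c γ δ u) v₀ v₁ v₂ :=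
  { K with
    proper := K.proper.kempeSwap hγ hδ u
    color₁₂_mem := kempeSwap_apply_mem_missingColors_of_ne hγ hδ hαγ hαδ K.color₁₂_mem }

theorem disjoint₀₂ (K : IsKiersteadPath₂ G c v₀ v₁ v₂) (hG : ¬ EdgeColorable G G.maxDegree) :
    Disjoint (missingColorsDel G v₀ v₁ c v₀) (missingColorsDel G v₀ v₁ c v₂) := by
  refine Set.disjoint_left.2 fun γ h₀ h₂ => ?_
  obtain ⟨t, h₁, -⟩ := exists_mem_missingColors_deleteEdges_of_adj (c := c) K.adj₀₁ ∅
    (by simpa using G.degree_le_maxDegree v₁)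
  have K' := K.kempeSwap (mem_missingColors_iff.1 h₀).1 (mem_missingColors_iff.1 h₁).1
    (ne_of_mem_missingColors h₂ K.edge₁₂_mem (Sym2.mem_mk_right _ _))
    (ne_of_mem_missingColors h₁ K.edge₁₂_mem (Sym2.mem_mk_left _ _)) v₂
  obtain ⟨h₁', h₂'⟩ := mem_missingColors_kempeSwap_of_not_edgeColorable hG K.adj₀₁.ne K.ne₀₂
    K.adj₁₂.ne K.proper h₀ h₂ h₁
  exact Set.disjoint_left.1 (K'.disjoint₁₂ hG) h₁' h₂'

variable [DecidableEq V]

theorem shift_proper (K : IsKiersteadPath₂ G c v₀ v₁ v₂) :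
    IsProperEdgeColoring (G.deleteEdges {s(v₁, v₂)}) G.maxDegree
      (Function.update c s(v₀, v₁) (c s(v₁, v₂))) := by
  have hsub : ∀ f ∈ (G.deleteEdges {s(v₁, v₂)}).edgeSet, f ≠ s(v₀, v₁) →
      f ∈ (G.deleteEdges {s(v₀, v₁)}).edgeSet := fun f hf hf₀₁ =>
    mem_edgeSet_deleteEdges_singleton.2 ⟨(mem_edgeSet_deleteEdges_singleton.1 hf).1, hf₀₁⟩
  refine K.proper.update (K.proper.mem_Icc K.edge₁₂_mem) hsub fun f hf hf₀₁ w hw hwf => ?_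
  rcases Sym2.mem_iff.1 hw with rfl | rfl
  · exact ne_of_mem_missingColors K.color₁₂_mem (hsub f hf hf₀₁) hwf
  · exact K.proper.ne_of_mem (hsub f hf hf₀₁) K.edge₁₂_mem
      (mem_edgeSet_deleteEdges_singleton.1 hf).2 hwf (Sym2.mem_mk_left _ _)

theorem mem_missingColors_shift_of_ne (K : IsKiersteadPath₂ G c v₀ v₁ v₂) {w : V}
    (hw : w ≠ v₀) {σ : ℕ} (h : σ ∈ missingColorsDel G v₀ v₁ c w) :
    σ ∈ missingColorsDel G v₁ v₂ (Function.update c s(v₀, v₁) (c s(v₁, v₂))) w := by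
  refine mem_missingColors_iff.2 ⟨(mem_missingColors_iff.1 h).1, fun f hf hwf => ?_⟩
  rcases eq_or_ne f s(v₀, v₁) with rfl | hf₀₁
  · obtain rfl : w = v₁ := (Sym2.mem_iff.1 hwf).resolve_left hw
    simpa using ne_of_mem_missingColors h K.edge₁₂_mem (Sym2.mem_mk_left _ _)
  · rw [Function.update_of_ne hf₀₁]
    exact ne_of_mem_missingColors h
      (mem_edgeSet_deleteEdges_singleton.2 ⟨(mem_edgeSet_deleteEdges_singleton.1 hf).1, hf₀₁⟩)
      hwf

theorem color₁₂_mem_shift (K : IsKiersteadPath₂ G c v₀ v₁ v₂) :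
    c s(v₁, v₂) ∈ missingColorsDel G v₁ v₂ (Function.update c s(v₀, v₁) (c s(v₁, v₂))) v₂ := by
  refine mem_missingColors_iff.2 ⟨K.proper.mem_Icc K.edge₁₂_mem, fun f hf hwf => ?_⟩
  obtain ⟨hfG, hf₁₂⟩ := mem_edgeSet_deleteEdges_singleton.1 hf
  have hf₀₁ : f ≠ s(v₀, v₁) := by
    rintro rfl
    simp [K.ne₀₂.symm, K.adj₁₂.ne'] at hwf
  rw [Function.update_of_ne hf₀₁]
  exact K.proper.ne_of_mem (mem_edgeSet_deleteEdges_singleton.2 ⟨hfG, hf₀₁⟩) K.edge₁₂_mem hf₁₂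
    hwf (Sym2.mem_mk_right _ _)

end IsKiersteadPath₂

namespace IsKiersteadPath₃

variable {v₀ v₁ v₂ v₃ : V}

theorem edge₂₃_mem (K : IsKiersteadPath₃ G c v₀ v₁ v₂ v₃) :
    s(v₂, v₃) ∈ (G.deleteEdges {s(v₀, v₁)}).edgeSet := by
  simpa [edgeSet_deleteEdges, K.ne₀₂.symm, K.adj₁₂.ne', K.ne₀₃.symm, K.ne₁₃.symm] using K.adj₂₃

theorem color₁₂_ne_color₂₃ (K : IsKiersteadPath₃ G c v₀ v₁ v₂ v₃) :
    c s(v₁, v₂) ≠ c s(v₂, v₃) :=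
  K.proper.ne_of_mem K.edge₁₂_mem K.edge₂₃_mem (by simp [K.adj₁₂.ne, K.ne₁₃])
    (Sym2.mem_mk_right _ _) (Sym2.mem_mk_left _ _)

theorem kempeSwap (K : IsKiersteadPath₃ G c v₀ v₁ v₂ v₃) {γ δ : ℕ}
    (hγ : γ ∈ Finset.Icc 1 G.maxDegree) (hδ : δ ∈ Finset.Icc 1 G.maxDegree)
    (hαγ : c s(v₁, v₂) ≠ γ) (hαδ : c s(v₁, v₂) ≠ δ) (hβγ : c s(v₂, v₃) ≠ γ)
    (hβδ : c s(v₂, v₃) ≠ δ) (u : V) :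
    IsKiersteadPath₃ G (_root_.kempeSwap (G.deleteEdges {s(v₀, v₁)}) c γ δ u) v₀ v₁ v₂ v₃ :=
  { K.toIsKiersteadPath₂.kempeSwap hγ hδ hαγ hαδ u, K with
    color₂₃_mem := K.color₂₃_mem.imp (kempeSwap_apply_mem_missingColors_of_ne hγ hδ hβγ hβδ)
      (kempeSwap_apply_mem_missingColors_of_ne hγ hδ hβγ hβδ) }

theorem disjoint₂₃ (K : IsKiersteadPath₃ G c v₀ v₁ v₂ v₃) (hG : ¬ EdgeColorable G G.maxDegree) :
    Disjoint (missingColorsDel G v₀ v₁ c v₂) (missingColorsDel G v₀ v₁ c v₃) := by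
  classical
  refine Set.disjoint_left.2 fun γ h₂ h₃ => ?_
  -- recolouring `v₂v₃` with `γ` makes its old colour missing at `v₂`, against the path `v₀ v₁ v₂`
  have hv₀ : v₀ ∉ s(v₂, v₃) := by simp [K.ne₀₂, K.ne₀₃]
  have hv₁ : v₁ ∉ s(v₂, v₃) := by simp [K.adj₁₂.ne, K.ne₁₃]
  have K' : IsKiersteadPath₂ G (Function.update c s(v₂, v₃) γ) v₀ v₁ v₂ :=
    { K.toIsKiersteadPath₂ with
      proper := K.proper.update_of_mem_missingColors h₂ h₃
      color₁₂_mem := by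
        rw [Function.update_of_ne (by simp [K.adj₁₂.ne, K.ne₁₃])]
        exact (mem_missingColors_update_of_notMem hv₀).2 K.color₁₂_mem }
  have hβ₂ := K.proper.mem_missingColors_update K.edge₂₃_mem (Sym2.mem_mk_left _ _)
    (ne_of_mem_missingColors h₃ K.edge₂₃_mem (Sym2.mem_mk_right _ _))
  rcases K.color₂₃_mem with hβ | hβ
  · exact Set.disjoint_left.1 (K'.disjoint₀₂ hG) ((mem_missingColors_update_of_notMem hv₀).2 hβ)
      hβ₂
  · exact Set.disjoint_left.1 (K'.disjoint₁₂ hG) ((mem_missingColors_update_of_notMem hv₁).2 hβ)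
      hβ₂

theorem shift [DecidableEq V] (K : IsKiersteadPath₃ G c v₀ v₁ v₂ v₃)
    (hβ : c s(v₂, v₃) ∈ missingColorsDel G v₀ v₁ c v₁) :
    IsKiersteadPath₂ G (Function.update c s(v₀, v₁) (c s(v₁, v₂))) v₁ v₂ v₃ where
  adj₀₁ := K.adj₁₂
  adj₁₂ := K.adj₂₃
  ne₀₂ := K.ne₁₃
  proper := K.shift_proper
  color₁₂_mem := by
    rw [Function.update_of_ne (mem_edgeSet_deleteEdges_singleton.1 K.edge₂₃_mem).2]
    exact K.mem_missingColors_shift_of_ne K.adj₀₁.ne' hβ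

theorem disjoint₁₃_of_color₂₃_mem₁ (K : IsKiersteadPath₃ G c v₀ v₁ v₂ v₃)
    (hG : ¬ EdgeColorable G G.maxDegree) (hβ : c s(v₂, v₃) ∈ missingColorsDel G v₀ v₁ c v₁) :
    Disjoint (missingColorsDel G v₀ v₁ c v₁) (missingColorsDel G v₀ v₁ c v₃) := by
  classical
  exact ((K.shift hβ).disjoint₀₂ hG).mono (fun _ => K.mem_missingColors_shift_of_ne K.adj₀₁.ne')
    (fun _ => K.mem_missingColors_shift_of_ne K.ne₀₃.symm)

theorem color₁₂_notMem₃_of_color₂₃_mem₁ (K : IsKiersteadPath₃ G c v₀ v₁ v₂ v₃)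
    (hG : ¬ EdgeColorable G G.maxDegree) (hβ : c s(v₂, v₃) ∈ missingColorsDel G v₀ v₁ c v₁) :
    c s(v₁, v₂) ∉ missingColorsDel G v₀ v₁ c v₃ := by
  classical
  exact fun h => Set.disjoint_left.1 ((K.shift hβ).disjoint₁₂ hG) K.color₁₂_mem_shift
    (K.mem_missingColors_shift_of_ne K.ne₀₃.symm h)

theorem disjoint₀₃_of_color₂₃_mem₁_of_degree₁_lt (K : IsKiersteadPath₃ G c v₀ v₁ v₂ v₃)
    (hG : ¬ EdgeColorable G G.maxDegree) (hβ : c s(v₂, v₃) ∈ missingColorsDel G v₀ v₁ c v₁)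
    (hd : G.degree v₁ < G.maxDegree) :
    Disjoint (missingColorsDel G v₀ v₁ c v₀) (missingColorsDel G v₀ v₁ c v₃) := by
  refine Set.disjoint_left.2 fun γ h₀ h₃ => ?_
  obtain ⟨t, h₁, htβ⟩ := exists_mem_missingColors_deleteEdges_of_adj (c := c) K.adj₀₁
    {c s(v₂, v₃)} (by simpa using hd)
  have hαγ : c s(v₁, v₂) ≠ γ := fun h => K.color₁₂_notMem₃_of_color₂₃_mem₁ hG hβ (h ▸ h₃)
  have hαt := ne_of_mem_missingColors h₁ K.edge₁₂_mem (Sym2.mem_mk_left _ _)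
  have hβγ := ne_of_mem_missingColors h₃ K.edge₂₃_mem (Sym2.mem_mk_right _ _)
  have hβt : c s(v₂, v₃) ≠ t := by simpa [eq_comm] using htβ
  have hγ := (mem_missingColors_iff.1 h₀).1
  have ht := (mem_missingColors_iff.1 h₁).1
  obtain ⟨h₁', h₃'⟩ := mem_missingColors_kempeSwap_of_not_edgeColorable hG K.adj₀₁.ne K.ne₀₃
    K.ne₁₃ K.proper h₀ h₃ h₁
  exact Set.disjoint_left.1 ((K.kempeSwap hγ ht hαγ hαt hβγ hβt v₃).disjoint₁₃_of_color₂₃_mem₁ hG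
    (kempeSwap_apply_mem_missingColors_of_ne hγ ht hβγ hβt hβ)) h₁' h₃'

theorem disjoint₀₃_of_color₂₃_mem₁_of_degree₂_lt (K : IsKiersteadPath₃ G c v₀ v₁ v₂ v₃)
    (hG : ¬ EdgeColorable G G.maxDegree) (hβ : c s(v₂, v₃) ∈ missingColorsDel G v₀ v₁ c v₁)
    (hd : G.degree v₂ < G.maxDegree) :
    Disjoint (missingColorsDel G v₀ v₁ c v₀) (missingColorsDel G v₀ v₁ c v₃) := by
  refine Set.disjoint_left.2 fun γ h₀ h₃ => ?_
  obtain ⟨δ, h₂⟩ := exists_mem_missingColors_of_degree_lt (c := c) (D := {s(v₀, v₁)}) hd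
  have hαγ : c s(v₁, v₂) ≠ γ := fun h => K.color₁₂_notMem₃_of_color₂₃_mem₁ hG hβ (h ▸ h₃)
  have hαδ := ne_of_mem_missingColors h₂ K.edge₁₂_mem (Sym2.mem_mk_right _ _)
  have hβγ := ne_of_mem_missingColors h₃ K.edge₂₃_mem (Sym2.mem_mk_right _ _)
  have hβδ := ne_of_mem_missingColors h₂ K.edge₂₃_mem (Sym2.mem_mk_left _ _)
  have hγ := (mem_missingColors_iff.1 h₀).1
  have hδ := (mem_missingColors_iff.1 h₂).1
  by_cases hr : (chainGraph (G.deleteEdges {s(v₀, v₁)}) c γ δ).Reachable v₃ v₂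
  · obtain ⟨-, hr₂⟩ := K.proper.not_reachable_chainGraph (.inl h₃) (.inr h₂) (.inl h₀)
      K.adj₂₃.ne' K.ne₀₃.symm K.ne₀₂.symm hr
    exact Set.disjoint_left.1 ((K.toIsKiersteadPath₂.kempeSwap hγ hδ hαγ hαδ v₀).disjoint₀₂ hG)
      (mem_missingColors_kempeSwap_self_left hγ hδ h₀)
      ((mem_missingColors_kempeSwap_of_not_reachable hr₂).2 h₂)
  · exact Set.disjoint_left.1 ((K.kempeSwap hγ hδ hαγ hαδ hβγ hβδ v₂).disjoint₂₃ hG)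
      (mem_missingColors_kempeSwap_self_right hγ hδ h₂)
      ((mem_missingColors_kempeSwap_of_not_reachable hr).2 h₃)

theorem disjoint₀₃_of_color₂₃_mem₁ (K : IsKiersteadPath₃ G c v₀ v₁ v₂ v₃)
    (hG : ¬ EdgeColorable G G.maxDegree) (hmin : min (G.degree v₁) (G.degree v₂) < G.maxDegree)
    (hβ : c s(v₂, v₃) ∈ missingColorsDel G v₀ v₁ c v₁) :
    Disjoint (missingColorsDel G v₀ v₁ c v₀) (missingColorsDel G v₀ v₁ c v₃) :=
  (min_lt_iff.1 hmin).elim (K.disjoint₀₃_of_color₂₃_mem₁_of_degree₁_lt hG hβ)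
    (K.disjoint₀₃_of_color₂₃_mem₁_of_degree₂_lt hG hβ)

theorem disjoint₁₃_of_color₂₃_mem₀ (K : IsKiersteadPath₃ G c v₀ v₁ v₂ v₃)
    (hG : ¬ EdgeColorable G G.maxDegree) (hmin : min (G.degree v₁) (G.degree v₂) < G.maxDegree)
    (hβ : c s(v₂, v₃) ∈ missingColorsDel G v₀ v₁ c v₀) :
    Disjoint (missingColorsDel G v₀ v₁ c v₁) (missingColorsDel G v₀ v₁ c v₃) := by
  refine Set.disjoint_left.2 fun γ h₁ h₃ => ?_
  have hαγ := ne_of_mem_missingColors h₁ K.edge₁₂_mem (Sym2.mem_mk_left _ _)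
  have hγ := (mem_missingColors_iff.1 h₁).1
  have hβ' := K.proper.mem_Icc K.edge₂₃_mem
  by_cases hr : (chainGraph (G.deleteEdges {s(v₀, v₁)}) c γ (c s(v₂, v₃))).Reachable v₀ v₁
  · obtain ⟨hr₀, hr₁⟩ := K.proper.not_reachable_chainGraph (.inr hβ) (.inl h₁) (.inl h₃)
      K.adj₀₁.ne K.ne₀₃ K.ne₁₃ hr
    -- swapping the chain at `v₃` recolours `v₂v₃` with `γ`, which is missing at `v₁`
    set c' := _root_.kempeSwap (G.deleteEdges {s(v₀, v₁)}) c γ (c s(v₂, v₃)) v₃ with hc'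
    have hβ₁ : c' s(v₂, v₃) ∈ missingColorsDel G v₀ v₁ c' v₁ := by
      rw [hc', kempeSwap_of_reachable (Sym2.mem_mk_right _ _) .rfl, Equiv.swap_apply_right]
      exact (mem_missingColors_kempeSwap_of_not_reachable hr₁).2 h₁
    have K' : IsKiersteadPath₃ G c' v₀ v₁ v₂ v₃ :=
      { K.toIsKiersteadPath₂.kempeSwap hγ hβ' hαγ K.color₁₂_ne_color₂₃ v₃, K with
        color₂₃_mem := .inr hβ₁ }
    exact Set.disjoint_left.1 (K'.disjoint₀₃_of_color₂₃_mem₁ hG hmin hβ₁)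
      ((mem_missingColors_kempeSwap_of_not_reachable hr₀).2 hβ)
      (mem_missingColors_kempeSwap_self_left hγ hβ' h₃)
  · exact hG (edgeColorable_of_mem_missingColors (K.proper.kempeSwap hγ hβ' v₁)
      ((mem_missingColors_kempeSwap_of_not_reachable hr).2 hβ)
      (mem_missingColors_kempeSwap_self_left hγ hβ' h₁))

theorem disjoint₁₃ (K : IsKiersteadPath₃ G c v₀ v₁ v₂ v₃) (hG : ¬ EdgeColorable G G.maxDegree)
    (hmin : min (G.degree v₁) (G.degree v₂) < G.maxDegree) :
    Disjoint (missingColorsDel G v₀ v₁ c v₁) (missingColorsDel G v₀ v₁ c v₃) := by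
  by_cases hβ : c s(v₂, v₃) ∈ missingColorsDel G v₀ v₁ c v₁
  · exact K.disjoint₁₃_of_color₂₃_mem₁ hG hβ
  · exact K.disjoint₁₃_of_color₂₃_mem₀ hG hmin (K.color₂₃_mem.resolve_right hβ)

theorem color₁₂_notMem₃ (K : IsKiersteadPath₃ G c v₀ v₁ v₂ v₃)
    (hG : ¬ EdgeColorable G G.maxDegree) (hmin : min (G.degree v₁) (G.degree v₂) < G.maxDegree) :
    c s(v₁, v₂) ∉ missingColorsDel G v₀ v₁ c v₃ := by
  intro h₃
  by_cases hβ₁ : c s(v₂, v₃) ∈ missingColorsDel G v₀ v₁ c v₁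
  · exact K.color₁₂_notMem₃_of_color₂₃_mem₁ hG hβ₁ h₃
  have hβ₀ := K.color₂₃_mem.resolve_right hβ₁
  obtain ⟨t, h₁, -⟩ := exists_mem_missingColors_deleteEdges_of_adj (c := c) K.adj₀₁ ∅
    (by simpa using G.degree_le_maxDegree v₁)
  have hα := K.proper.mem_Icc K.edge₁₂_mem
  have ht := (mem_missingColors_iff.1 h₁).1
  have hβt : c s(v₂, v₃) ≠ t := fun h => hβ₁ (h ▸ h₁)
  by_cases hr₁₃ : (chainGraph (G.deleteEdges {s(v₀, v₁)}) c (c s(v₁, v₂)) t).Reachable v₁ v₃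
  · obtain ⟨hr₁₀, -⟩ := K.proper.not_reachable_chainGraph (.inr h₁) (.inl h₃)
      (.inl K.color₁₂_mem) K.ne₁₃ K.adj₀₁.ne' K.ne₀₃.symm hr₁₃
    exact hG (edgeColorable_of_mem_missingColors (K.proper.kempeSwap hα ht v₀)
      (mem_missingColors_kempeSwap_self_left hα ht K.color₁₂_mem)
      ((mem_missingColors_kempeSwap_of_not_reachable hr₁₀).2 h₁))
  by_cases hr₀₃ : (chainGraph (G.deleteEdges {s(v₀, v₁)}) c (c s(v₁, v₂)) t).Reachable v₀ v₃
  · exact hG (edgeColorable_of_mem_missingColors (K.proper.kempeSwap hα ht v₃)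
      ((mem_missingColors_kempeSwap_of_reachable hα ht hr₀₃).2
        (by rw [Equiv.swap_apply_right]; exact K.color₁₂_mem))
      ((mem_missingColors_kempeSwap_of_not_reachable hr₁₃).2 h₁))
  -- the chain at `v₃` avoids `v₀` and `v₁`, so swapping it keeps the Kierstead path
  have K' : IsKiersteadPath₃ G
      (_root_.kempeSwap (G.deleteEdges {s(v₀, v₁)}) c (c s(v₁, v₂)) t v₃) v₀ v₁ v₂ v₃ :=
    { K with
      proper := K.proper.kempeSwap hα ht v₃
      color₁₂_mem := by
        rw [kempeSwap_of_not_reachable K.edge₁₂_mem (Sym2.mem_mk_left _ _) hr₁₃]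
        exact (mem_missingColors_kempeSwap_of_not_reachable hr₀₃).2 K.color₁₂_mem
      color₂₃_mem := .inl <|
        kempeSwap_apply_mem_missingColors_of_ne hα ht K.color₁₂_ne_color₂₃.symm hβt hβ₀ }
  exact Set.disjoint_left.1 (K'.disjoint₁₃ hG hmin)
    ((mem_missingColors_kempeSwap_of_not_reachable hr₁₃).2 h₁)
    (mem_missingColors_kempeSwap_self_left hα ht h₃)

theorem disjoint₀₃ (K : IsKiersteadPath₃ G c v₀ v₁ v₂ v₃) (hG : ¬ EdgeColorable G G.maxDegree)
    (hmin : min (G.degree v₁) (G.degree v₂) < G.maxDegree) :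
    Disjoint (missingColorsDel G v₀ v₁ c v₀) (missingColorsDel G v₀ v₁ c v₃) := by
  refine Set.disjoint_left.2 fun γ h₀ h₃ => ?_
  by_cases hβ₁ : c s(v₂, v₃) ∈ missingColorsDel G v₀ v₁ c v₁
  · exact Set.disjoint_left.1 (K.disjoint₀₃_of_color₂₃_mem₁ hG hmin hβ₁) h₀ h₃
  obtain ⟨t, h₁, -⟩ := exists_mem_missingColors_deleteEdges_of_adj (c := c) K.adj₀₁ ∅
    (by simpa using G.degree_le_maxDegree v₁)
  have hαγ : c s(v₁, v₂) ≠ γ := fun h => K.color₁₂_notMem₃ hG hmin (h ▸ h₃)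
  have hαt := ne_of_mem_missingColors h₁ K.edge₁₂_mem (Sym2.mem_mk_left _ _)
  have hβγ := ne_of_mem_missingColors h₃ K.edge₂₃_mem (Sym2.mem_mk_right _ _)
  have hβt : c s(v₂, v₃) ≠ t := fun h => hβ₁ (h ▸ h₁)
  obtain ⟨h₁', h₃'⟩ := mem_missingColors_kempeSwap_of_not_edgeColorable hG K.adj₀₁.ne K.ne₀₃
    K.ne₁₃ K.proper h₀ h₃ h₁
  exact Set.disjoint_left.1 ((K.kempeSwap (mem_missingColors_iff.1 h₀).1
    (mem_missingColors_iff.1 h₁).1 hαγ hαt hβγ hβt v₃).disjoint₁₃ hG hmin) h₁' h₃'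

theorem pairwiseDisjoint (K : IsKiersteadPath₃ G c v₀ v₁ v₂ v₃)
    (hG : ¬ EdgeColorable G G.maxDegree) (hmin : min (G.degree v₁) (G.degree v₂) < G.maxDegree) :
    ({v₀, v₁, v₂, v₃} : Set V).PairwiseDisjoint (missingColorsDel G v₀ v₁ c) := by
  have d₀₁ := disjoint_missingColors_of_not_edgeColorable hG K.proper
  simp only [Set.pairwiseDisjoint_insert, Set.pairwiseDisjoint_singleton, Set.mem_insert_iff,
    Set.mem_singleton_iff, forall_eq_or_imp, forall_eq, true_and]
  exact ⟨⟨fun _ => K.disjoint₂₃ hG, fun _ => K.disjoint₁₂ hG, fun _ => K.disjoint₁₃ hG hmin⟩,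
    fun _ => d₀₁, fun _ => K.disjoint₀₂ hG, fun _ => K.disjoint₀₃ hG hmin⟩

end IsKiersteadPath₃

end KiersteadPaths

open Classical in
theorem stmt_17_general {V : Type*} [Fintype V] (G : SimpleGraph V)
    (hclass2b : ¬ EdgeColorable G G.maxDegree)
    (v₀ v₁ v₂ v₃ : V) (hnd : [v₀, v₁, v₂, v₃].Nodup)
    (h01 : G.Adj v₀ v₁) (h12 : G.Adj v₁ v₂) (h23 : G.Adj v₂ v₃)
    (c : Sym2 V → ℕ)
    (hc : IsProperEdgeColoring (G.deleteEdges {s(v₀, v₁)}) G.maxDegree c)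
    (hK1 : c (s(v₁, v₂)) ∈
      missingColors (G.deleteEdges {s(v₀, v₁)}) G.maxDegree c v₀)
    (hK2 : c (s(v₂, v₃)) ∈
      missingColors (G.deleteEdges {s(v₀, v₁)}) G.maxDegree c v₀ ∪
        missingColors (G.deleteEdges {s(v₀, v₁)}) G.maxDegree c v₁)
    (hmin : min (G.degree v₁) (G.degree v₂) < G.maxDegree) :
    ∀ u ∈ ({v₀, v₁, v₂, v₃} : Set V), ∀ v ∈ ({v₀, v₁, v₂, v₃} : Set V), u ≠ v →
      missingColors (G.deleteEdges {s(v₀, v₁)}) G.maxDegree c u ∩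
        missingColors (G.deleteEdges {s(v₀, v₁)}) G.maxDegree c v = ∅ := by
  obtain ⟨⟨-, n02, n03⟩, ⟨-, n13⟩, -⟩ : (v₀ ≠ v₁ ∧ v₀ ≠ v₂ ∧ v₀ ≠ v₃) ∧ (v₁ ≠ v₂ ∧ v₁ ≠ v₃) ∧
      v₂ ≠ v₃ := by simpa using hnd
  have K : IsKiersteadPath₃ G c v₀ v₁ v₂ v₃ :=
    ⟨⟨h01, h12, n02, hc, hK1⟩, h23, n03, n13, hK2⟩
  exact fun u hu v hv huv =>
    Set.disjoint_iff_inter_eq_empty.1 (K.pairwiseDisjoint hclass2b hmin hu hv huv)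

open Classical in
theorem stmt_17 {V : Type*} [Fintype V] (G : SimpleGraph V)
    (hclass2a : EdgeColorable G (G.maxDegree + 1))
    (hclass2b : ¬ EdgeColorable G G.maxDegree)
    (v₀ v₁ v₂ v₃ : V) (hnd : [v₀, v₁, v₂, v₃].Nodup)
    (h01 : G.Adj v₀ v₁) (h12 : G.Adj v₁ v₂) (h23 : G.Adj v₂ v₃)
    (c : Sym2 V → ℕ)
    (hc : IsProperEdgeColoring (G.deleteEdges {s(v₀, v₁)}) G.maxDegree c)
    (hK1 : c (s(v₁, v₂)) ∈
      missingColors (G.deleteEdges {s(v₀, v₁)}) G.maxDegree c v₀)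
    (hK2 : c (s(v₂, v₃)) ∈
      missingColors (G.deleteEdges {s(v₀, v₁)}) G.maxDegree c v₀ ∪
        missingColors (G.deleteEdges {s(v₀, v₁)}) G.maxDegree c v₁)
    (hmin : min (G.degree v₁) (G.degree v₂) < G.maxDegree) :
    ∀ u ∈ ({v₀, v₁, v₂, v₃} : Set V), ∀ v ∈ ({v₀, v₁, v₂, v₃} : Set V), u ≠ v →
      missingColors (G.deleteEdges {s(v₀, v₁)}) G.maxDegree c u ∩
        missingColors (G.deleteEdges {s(v₀, v₁)}) G.maxDegree c v = ∅ :=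
  stmt_17_general G hclass2b v₀ v₁ v₂ v₃ hnd h01 h12 h23 c hc hK1 hK2 hmin
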